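/- arXiv:1004.0334 — 5 statements merged into one kernel-verified Lean document; each statement's English description precedes it below -/
import Mathlib

section
/- Let E = (C, V) be an election under a scoring rule α, and let s be a successful shift-action for p (i.e., p is a winner after applying s) that increases p's score by k points over its score in E. Then every shift-action r that increases p's score by exactly 2k points over its score in E is also successful, i.e., p is a winner of shf(C, V, r). -/
/-- Shift the designated candidate `p` up by one position in the vote `v`
(a vote is a bijection from candidates to positions; position 0 is the top). -/
def shiftOne {C : Type*} [DecidableEq C] {m : ℕ} (p : C) (v : C ≃ Fin m) : C ≃ Fin m :=
  if h : ((v p : ℕ) = 0) then v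
  else (Equiv.swap p (v.symm ⟨(v p : ℕ) - 1, lt_of_le_of_lt (Nat.sub_le _ _) (v p).isLt⟩)).trans v

/-- Shift `p` upwards by `t` positions in the vote `v` (capping at the top). -/
def shiftVote {C : Type*} [DecidableEq C] {m : ℕ} (p : C) (t : ℕ) (v : C ≃ Fin m) :
    C ≃ Fin m := (shiftOne p)^[t] v

/-- Apply a shift-action `t = (t₁,…,t_n)` to an election: shift `p` upwards by
`t i` positions in the `i`-th vote. -/
def shf {C : Type*} [DecidableEq C] {m n : ℕ} (p : C) (votes : Fin n → C ≃ Fin m)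
    (t : Fin n → ℕ) : Fin n → C ≃ Fin m :=
  fun i => shiftVote p (t i) (votes i)

/-- The score of candidate `x` under the scoring vector `α`. -/
def score {C : Type*} [Fintype C] [DecidableEq C] {m n : ℕ} (α : Fin m → ℤ)
    (votes : Fin n → C ≃ Fin m) (x : C) : ℤ := ∑ i, α (votes i x)

/-- `p` is a winner of the election under the scoring vector `α`. -/
def winner {C : Type*} [Fintype C] [DecidableEq C] {m n : ℕ} (α : Fin m → ℤ)
    (votes : Fin n → C ≃ Fin m) (p : C) : Prop :=
  ∀ x, score α votes x ≤ score α votes p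

/-! Shifting `p` up never raises the score of another candidate `x`, and in each vote `p` gains at
least what `x` loses: the only candidate that loses anything is the one `p` swaps with, and it
loses exactly what `p` gains. Summing over the votes, for `x ≠ p`,
`score_r x ≤ score x ≤ score_s x + score_s p - score p ≤ 2 score_s p - score p = score_r p`. -/

section

variable {C : Type*} [DecidableEq C] {m : ℕ} (p : C) (v : C ≃ Fin m)

theorem shiftOne_apply_self_le : shiftOne p v p ≤ v p := by
  unfold shiftOne
  split_ifs
  · exact le_rfl
  · simp only [Equiv.trans_apply, Equiv.swap_apply_left, Equiv.apply_symm_apply]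
    exact Fin.mk_le_mk.mpr (Nat.sub_le _ _)

theorem shiftOne_apply_of_ne {x : C} (hx : x ≠ p) :
    shiftOne p v x = v x ∨ shiftOne p v x = v p ∧ shiftOne p v p = v x := by
  unfold shiftOne
  split_ifs
  · exact .inl rfl
  · set q := v.symm ⟨(v p : ℕ) - 1, lt_of_le_of_lt (Nat.sub_le _ _) (v p).isLt⟩
    simp only [Equiv.trans_apply, Equiv.swap_apply_left]
    by_cases hxq : x = q
    · subst hxq
      exact .inr ⟨by rw [Equiv.swap_apply_right], rfl⟩
    · exact .inl (by rw [Equiv.swap_apply_of_ne_of_ne hx hxq])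

theorem shiftVote_succ (t : ℕ) : shiftVote p (t + 1) v = shiftOne p (shiftVote p t v) :=
  Function.iterate_succ_apply' _ _ _

end

section

variable {C : Type*} [DecidableEq C] {m : ℕ} {β : Type*} {α : Fin m → β} (p : C) {x : C}

theorem apply_shiftOne_le [Preorder β] (hα : Antitone α) (v : C ≃ Fin m) (hx : x ≠ p) :
    α (shiftOne p v x) ≤ α (v x) := by
  rcases shiftOne_apply_of_ne p v hx with h | ⟨h, hp⟩
  · rw [h]
  · rw [h, ← hp]
    exact hα (shiftOne_apply_self_le p v)

theorem apply_add_apply_le_shiftOne [AddCommMonoid β] [PartialOrder β] [IsOrderedAddMonoid β]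
    (hα : Antitone α) (v : C ≃ Fin m) (hx : x ≠ p) :
    α (v x) + α (v p) ≤ α (shiftOne p v x) + α (shiftOne p v p) := by
  rcases shiftOne_apply_of_ne p v hx with h | ⟨h, hp⟩
  · rw [h]
    exact add_le_add_right (hα (shiftOne_apply_self_le p v)) _
  · rw [h, hp, add_comm]

theorem apply_shiftVote_le [Preorder β] (hα : Antitone α) (v : C ≃ Fin m) (hx : x ≠ p)
    (t : ℕ) : α (shiftVote p t v x) ≤ α (v x) := by
  induction t with
  | zero => exact le_rfl
  | succ t ih => exact (shiftVote_succ p v t ▸ apply_shiftOne_le p hα _ hx).trans ih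

theorem apply_add_apply_le_shiftVote [AddCommMonoid β] [PartialOrder β] [IsOrderedAddMonoid β]
    (hα : Antitone α) (v : C ≃ Fin m) (hx : x ≠ p) (t : ℕ) :
    α (v x) + α (v p) ≤ α (shiftVote p t v x) + α (shiftVote p t v p) := by
  induction t with
  | zero => exact le_rfl
  | succ t ih => exact ih.trans (shiftVote_succ p v t ▸ apply_add_apply_le_shiftOne p hα _ hx)

end

section

variable {C : Type*} [Fintype C] [DecidableEq C] {m n : ℕ} {α : Fin m → ℤ}
  (p : C) (votes : Fin n → C ≃ Fin m) (t : Fin n → ℕ) {x : C}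

theorem score_shf_le (hα : Antitone α) (hx : x ≠ p) :
    score α (shf p votes t) x ≤ score α votes x :=
  Finset.sum_le_sum fun i _ => apply_shiftVote_le p hα (votes i) hx (t i)

theorem score_add_score_le_shf (hα : Antitone α) (hx : x ≠ p) :
    score α votes x + score α votes p ≤ score α (shf p votes t) x + score α (shf p votes t) p := by
  simp only [score, ← Finset.sum_add_distrib]
  exact Finset.sum_le_sum fun i _ => apply_add_apply_le_shiftVote p hα (votes i) hx (t i)

end

/-- Lemma 2 of the paper: if a successful shift-action `s`
increases `p`'s score by `k`, then every shift-action `r` that increases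
`p`'s score by exactly `2k` is also successful. -/
theorem stmt1 {C : Type*} [Fintype C] [DecidableEq C] {m n : ℕ}
    (α : Fin m → ℤ) (hα : Antitone α) (p : C)
    (votes : Fin n → C ≃ Fin m) (s r : Fin n → ℕ) (k : ℤ)
    (hs_win : winner α (shf p votes s) p)
    (hk : score α (shf p votes s) p = score α votes p + k)
    (hr : score α (shf p votes r) p = score α votes p + 2 * k) :
    winner α (shf p votes r) p := by
  intro x
  rcases eq_or_ne x p with rfl | hx
  · exact le_rfl
  have hr_x := score_shf_le p votes r hα hx
  have hs_x := score_add_score_le_shf p votes s hα hx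
  linarith [hs_win x]
end

section
/- Let E = (C, V) be an election under a scoring rule, and suppose a shift-action s increases p's score by k points and makes p a winner. Then for every candidate c ∈ C, the initial score deficit satisfies Sc_E(c) − Sc_E(p) ≤ 2k. -/
section Shift

variable {C : Type*} [DecidableEq C] {m : ℕ} {β : Type*} [Preorder β] {α : Fin m → β}

lemma apply_shiftOne_le_of_ne (hα : Antitone α) {p c : C} (hc : c ≠ p) (v : C ≃ Fin m) :
    α (shiftOne p v c) ≤ α (v c) := by
  unfold shiftOne
  split_ifs
  · exact le_rfl
  · set q := v.symm ⟨(v p : ℕ) - 1, lt_of_le_of_lt (Nat.sub_le _ _) (v p).isLt⟩ with hq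
    rcases eq_or_ne c q with rfl | hcq
    · rw [Equiv.trans_apply, Equiv.swap_apply_right]
      exact hα (by simp [hq, Fin.le_def])
    · rw [Equiv.trans_apply, Equiv.swap_apply_of_ne_of_ne hc hcq]

lemma apply_shiftVote_le_of_ne (hα : Antitone α) {p c : C} (hc : c ≠ p) (t : ℕ)
    (v : C ≃ Fin m) : α (shiftVote p t v c) ≤ α (v c) := by
  induction t with
  | zero => exact le_rfl
  | succ t ih =>
    rw [shiftVote, Function.iterate_succ_apply']
    exact (apply_shiftOne_le_of_ne hα hc _).trans ih

end Shift

section Score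

variable {C : Type*} [Fintype C] [DecidableEq C] {m n : ℕ}

lemma score_shf_le_of_ne {α : Fin m → ℤ} (hα : Antitone α) {p c : C} (hc : c ≠ p)
    (votes : Fin n → C ≃ Fin m) (s : Fin n → ℕ) :
    score α (shf p votes s) c ≤ score α votes c :=
  Finset.sum_le_sum fun i _ => apply_shiftVote_le_of_ne hα hc (s i) (votes i)

lemma sum_score (α : Fin m → ℤ) (votes : Fin n → C ≃ Fin m) :
    ∑ x, score α votes x = n * ∑ j, α j := by
  unfold score
  rw [Finset.sum_comm]
  simp [Equiv.sum_comp]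

end Score

lemma sub_le_sub_of_sum_eq_of_forall_ne_le {ι G : Type*} [Fintype ι] [DecidableEq ι]
    [AddCommGroup G] [PartialOrder G] [IsOrderedAddMonoid G] {f g : ι → G}
    (hsum : ∑ x, f x = ∑ x, g x) {p : ι} (hle : ∀ x, x ≠ p → g x ≤ f x) (c : ι) :
    f c - g c ≤ g p - f p := by
  have hloss : ∑ x ∈ Finset.univ.erase p, (f x - g x) = g p - f p := by
    rw [Finset.sum_sub_distrib, Finset.sum_erase_eq_sub (Finset.mem_univ p),
      Finset.sum_erase_eq_sub (Finset.mem_univ p), hsum]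
    abel
  have hnonneg : ∀ x ∈ Finset.univ.erase p, 0 ≤ f x - g x := fun x hx =>
    sub_nonneg.2 (hle x (Finset.ne_of_mem_erase hx))
  rcases eq_or_ne c p with rfl | hc
  · have hgain : 0 ≤ g c - f c := hloss ▸ Finset.sum_nonneg hnonneg
    rw [← neg_sub]
    exact neg_le_self hgain
  · exact hloss ▸ Finset.single_le_sum hnonneg (Finset.mem_erase.2 ⟨hc, Finset.mem_univ c⟩)

/-- if a shift-action `s` increases `p`'s score by `k` and makes
`p` a winner, then every candidate's initial score deficit over `p` is at most `2k`. -/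
theorem stmt2 {C : Type*} [Fintype C] [DecidableEq C] {m n : ℕ}
    (α : Fin m → ℤ) (hα : Antitone α) (p : C)
    (votes : Fin n → C ≃ Fin m) (s : Fin n → ℕ) (k : ℤ)
    (hs_win : winner α (shf p votes s) p)
    (hk : score α (shf p votes s) p = score α votes p + k) :
    ∀ c : C, score α votes c - score α votes p ≤ 2 * k := by
  intro c
  have hloss : score α votes c - score α (shf p votes s) c ≤ k := by
    have := sub_le_sub_of_sum_eq_of_forall_ne_le (f := score α votes)
      (g := score α (shf p votes s)) (by rw [sum_score, sum_score])
      (fun x hx => score_shf_le_of_ne hα hx votes s) c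
    linarith
  linarith [hs_win c]
end

section
/- Let t = (t₁,...,t_n) and s = (s₁,...,s_n) be shift-actions for an instance (C, V, Π, p) of shift bribery, and define r by r_i = min(t_i, s_i). Let Π' be the residual cost functions after applying s, i.e., π'^i(k) = π^i(k + s_i) − π^i(s_i). Then the cost of the shift-action t − r under Π' is at most the cost of t under Π: Π'(t − r) ≤ Π(t). -/
/-!
Coordinatewise, `t i - min (t i) (s i) + s i = max (t i) (s i)`. If `t i ≤ s i` the residual
cost is `π(s i) - π(s i) = 0`; otherwise it is `π(t i) - π(s i)`, which is at most `π(t i)`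
because costs are nonnegative. Summing over the voters gives the claim.
-/

section CanonicallyOrdered

variable {α β : Type*}
  [AddCommMonoid α] [LinearOrder α] [CanonicallyOrderedAdd α] [Sub α] [OrderedSub α]
  [AddCommMonoid β] [PartialOrder β] [CanonicallyOrderedAdd β] [Sub β] [OrderedSub β]

theorem tsub_min_add_eq_max (a b : α) : a - min a b + b = max a b := by
  rw [tsub_min, tsub_add_eq_max]

theorem map_tsub_min_add_tsub_le (f : α → β) (a b : α) : f (a - min a b + b) - f b ≤ f a := by
  rw [tsub_min_add_eq_max]
  rcases le_total a b with hab | hba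
  · simp only [max_eq_right hab, tsub_self, zero_le]
  · rw [max_eq_left hba]
    exact tsub_le_self

end CanonicallyOrdered

theorem stmt3_general (n : ℕ) (π : Fin n → ℕ → ℕ)
    (t s : Fin n → ℕ) :
    ∑ i, (π i ((t i - min (t i) (s i)) + s i) - π i (s i)) ≤ ∑ i, π i (t i) :=
  Finset.sum_le_sum fun i _ => map_tsub_min_add_tsub_le (π i) (t i) (s i)

/-- with `r i = min (t i) (s i)` and residual cost functions
`π'^i(k) = π^i(k + s_i) − π^i(s_i)`, the cost of `t − r` under the residual
costs is at most the cost of `t` under the original costs. -/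
theorem stmt3 (n : ℕ) (π : Fin n → ℕ → ℕ)
    (hπ0 : ∀ i, π i 0 = 0) (hπmono : ∀ i, Monotone (π i))
    (t s : Fin n → ℕ) :
    ∑ i, (π i ((t i - min (t i) (s i)) + s i) - π i (s i)) ≤ ∑ i, π i (t i) :=
  stmt3_general n π t s
end

section
/- Let t be an optimal shift-action of cost Π(t) = opt for a shift bribery instance I with n voters, and suppose index i satisfies π^i(t_i) ≥ Π(t)/n. Let d be the shift-action shifting only in vote i by t_i positions, and let s be a (2 + 1/n)-approximate solution for the residual instance shf(I, d), whose optimum equals opt − π^i(t_i). Then the combined shift-action s + d is successful and has cost Π(s + d) ≤ 2·opt. -/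
/-- Residual cost functions after applying a shift-action `d`. -/
def residCost {n : ℕ} (π : Fin n → ℕ → ℕ) (d : Fin n → ℕ) : Fin n → ℕ → ℕ :=
  fun i k => π i (k + d i) - π i (d i)


/-!
Shifting by `d` and then by `s` is shifting by `s + d`, so `s + d` is successful. Its cost splits
as the residual cost of `s` plus `π^i(t_i)`, and with `opt = Π(t)` and `P = π^i(t_i) ≥ opt / n`,
`(2 + 1/n)(opt - P) + P = 2 opt - P + (opt - P)/n ≤ 2 opt`, because `(opt - P)/n ≤ opt/n ≤ P`.
-/

theorem shiftVote_shiftVote {C : Type*} [DecidableEq C] {m : ℕ} (p : C) (a b : ℕ)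
    (v : C ≃ Fin m) : shiftVote p a (shiftVote p b v) = shiftVote p (a + b) v :=
  (Function.iterate_add_apply _ _ _ _).symm

theorem shf_shf {C : Type*} [DecidableEq C] {m n : ℕ} (p : C) (votes : Fin n → C ≃ Fin m)
    (d s : Fin n → ℕ) : shf p (shf p votes d) s = shf p votes (s + d) :=
  funext fun j => shiftVote_shiftVote p (s j) (d j) (votes j)

theorem sum_cost_add_eq {n : ℕ} {π : Fin n → ℕ → ℕ} (hπmono : ∀ j, Monotone (π j))
    (d s : Fin n → ℕ) :
    ∑ j, π j (s j + d j) = ∑ j, residCost π d j (s j) + ∑ j, π j (d j) := by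
  rw [← Finset.sum_add_distrib]
  exact Finset.sum_congr rfl fun j _ =>
    (Nat.sub_add_cancel (hπmono j (Nat.le_add_left _ _))).symm

theorem sum_cost_ite_eq {n : ℕ} {π : Fin n → ℕ → ℕ} (hπ0 : ∀ j, π j 0 = 0) (i : Fin n)
    (a : ℕ) : ∑ j, π j (if j = i then a else 0) = π i a := by
  simp only [apply_ite (π _), hπ0, Finset.sum_ite_eq', Finset.mem_univ, if_true]

theorem add_le_two_mul_of_le_approx {O P R : ℚ} {n : ℕ} (hP : 0 ≤ P) (hbig : O / n ≤ P)
    (hR : R ≤ (2 + 1 / n) * (O - P)) : R + P ≤ 2 * O := by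
  have hsmall : (O - P) / n ≤ P :=
    (div_le_div_of_nonneg_right (by linarith) n.cast_nonneg).trans hbig
  have hexpand : (2 + 1 / (n : ℚ)) * (O - P) = 2 * (O - P) + (O - P) / n := by ring
  linarith

theorem stmt7_general {C : Type*} [Fintype C] [DecidableEq C] {m n : ℕ}
    (α : Fin m → ℤ) (p : C)
    (votes : Fin n → C ≃ Fin m) (π : Fin n → ℕ → ℕ)
    (hπ0 : ∀ j, π j 0 = 0) (hπmono : ∀ j, Monotone (π j))
    (t : Fin n → ℕ)
    (i : Fin n)
    (hbig : ((∑ j, π j (t j) : ℕ) : ℚ) / n ≤ (π i (t i) : ℚ))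
    (d : Fin n → ℕ) (hd : d = fun j => if j = i then t i else 0)
    (s : Fin n → ℕ)
    (hs_win : winner α (shf p (shf p votes d) s) p)
    (hs_cost : ((∑ j, residCost π d j (s j) : ℕ) : ℚ) ≤
      (2 + 1 / n) * (((∑ j, π j (t j)) - π i (t i) : ℕ) : ℚ)) :
    winner α (shf p votes (fun j => s j + d j)) p ∧
      ((∑ j, π j (s j + d j) : ℕ) : ℚ) ≤ 2 * ((∑ j, π j (t j) : ℕ) : ℚ) := by
  refine ⟨shf_shf p votes d s ▸ hs_win, ?_⟩
  have hPO : π i (t i) ≤ ∑ j, π j (t j) :=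
    Finset.single_le_sum (f := fun j => π j (t j)) (fun _ _ => Nat.zero_le _) (Finset.mem_univ i)
  rw [hd, Nat.cast_sub hPO] at hs_cost
  rw [sum_cost_add_eq hπmono, hd, sum_cost_ite_eq hπ0, Nat.cast_add]
  exact add_le_two_mul_of_le_approx (Nat.cast_nonneg _) hbig hs_cost

/-- bootstrapping step: if `t` is an optimal shift-action of cost
`opt`, voter `i` satisfies `π^i(t_i) ≥ Π(t)/n`, `d` shifts only in vote `i` by
`t_i` positions, and `s` is a `(2 + 1/n)`-approximate solution for the residual
instance `shf(I, d)` (whose optimum is `opt − π^i(t_i)`), then `s + d` is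
successful and costs at most `2·opt`. -/
theorem stmt7 {C : Type*} [Fintype C] [DecidableEq C] {m n : ℕ} (hn : 0 < n)
    (α : Fin m → ℤ) (hα : Antitone α) (p : C)
    (votes : Fin n → C ≃ Fin m) (π : Fin n → ℕ → ℕ)
    (hπ0 : ∀ j, π j 0 = 0) (hπmono : ∀ j, Monotone (π j))
    (t : Fin n → ℕ)
    (ht_win : winner α (shf p votes t) p)
    (ht_opt : ∀ u : Fin n → ℕ, winner α (shf p votes u) p →
      ∑ j, π j (t j) ≤ ∑ j, π j (u j))
    (i : Fin n)
    (hbig : ((∑ j, π j (t j) : ℕ) : ℚ) / n ≤ (π i (t i) : ℚ))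
    (d : Fin n → ℕ) (hd : d = fun j => if j = i then t i else 0)
    (s : Fin n → ℕ)
    (hs_win : winner α (shf p (shf p votes d) s) p)
    (hres_opt : ∀ u : Fin n → ℕ, winner α (shf p (shf p votes d) u) p →
      (∑ j, π j (t j)) - π i (t i) ≤ ∑ j, residCost π d j (u j))
    (hs_cost : ((∑ j, residCost π d j (s j) : ℕ) : ℚ) ≤
      (2 + 1 / n) * (((∑ j, π j (t j)) - π i (t i) : ℕ) : ℚ)) :
    winner α (shf p votes (fun j => s j + d j)) p ∧
      ((∑ j, π j (s j + d j) : ℕ) : ℚ) ≤ 2 * ((∑ j, π j (t j) : ℕ) : ℚ) :=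
  stmt7_general α p votes π hπ0 hπmono t i hbig d hd s hs_win hs_cost
end

section
/- In the Borda shift-bribery instance I_k with the given cost functions (each of the 4k voters ranking p second charges T per unit shift; voter v^{4k+1} charges T+1 for the first position, T for positions 2..k, T−2 for position k+1, and T−1 thereafter; voter v^{4k+2} charges nothing), the minimum cost of a successful shift-action is exactly 2kT, achieved by shifting p up one position in 2k of the first 4k votes. -/
/-!
The Borda margin of `p` over a rival is a sum over the votes. Shifting `p` up by `ℓ` in one vote
raises that margin by `min ℓ (pos p)`, plus one if the rival is passed, hence by at most
`2 * min ℓ (pos p)`. In each of the first `4k` votes a unit of margin over `c` therefore costs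
`T / 2`, and the cost function of `v^{4k+1}` is designed so that it costs at least `T / 2` there
too. As `p` starts `4k` points behind `c`, every successful shift-action costs at least `2kT`,
and shifting `p` past `c` in `2k` of the first votes achieves this. The candidates `aⱼ` never
matter: initially none of them beats `p`, and shifting `p` only increases its margins.
-/

open Finset

-- Positions count from the top, so this is the Borda score of `x` minus that of `y` in `w`.
def bordaMargin {C : Type*} {m : ℕ} (w : C ≃ Fin m) (x y : C) : ℤ := (w y : ℕ) - (w x : ℕ)

theorem sum_sub_le_sum_sub_iff {C ι : Type*} {m : ℕ} (s : Finset ι) (M : ℤ)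
    (w : ι → C ≃ Fin m) (x y : C) :
    ∑ i ∈ s, (M - (w i x : ℕ)) ≤ ∑ i ∈ s, (M - (w i y : ℕ)) ↔
      0 ≤ ∑ i ∈ s, bordaMargin (w i) y x := by
  rw [← sub_nonneg, ← sum_sub_distrib]
  simp only [bordaMargin, sub_sub_sub_cancel_left]

section Shift

variable {C : Type*} [DecidableEq C] {m : ℕ}

theorem shiftOne_apply_val (p x : C) (w : C ≃ Fin m) :
    ((shiftOne p w x : Fin m) : ℕ) =
      if (w p : ℕ) = 0 then (w x : ℕ)
      else if x = p then (w p : ℕ) - 1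
      else if (w x : ℕ) = (w p : ℕ) - 1 then w p
      else w x := by
  unfold shiftOne
  split_ifs with hp hxp hx
  · rfl
  · subst hxp; simp
  · rw [Equiv.trans_apply, Equiv.swap_apply_def, if_neg hxp,
      if_pos (w.eq_symm_apply.2 (Fin.ext hx))]
  · rw [Equiv.trans_apply, Equiv.swap_apply_def, if_neg hxp,
      if_neg fun h => hx (by rw [w.eq_symm_apply.1 h])]

theorem shiftVote_apply_val (p : C) (t : ℕ) (w : C ≃ Fin m) (x : C) :
    ((shiftVote p t w x : Fin m) : ℕ) =
      if x = p then (w p : ℕ) - t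
      else if (w p : ℕ) - t ≤ w x ∧ (w x : ℕ) < w p then (w x : ℕ) + 1
      else w x := by
  induction t generalizing x with
  | zero => split_ifs <;> simp_all [shiftVote]; omega
  | succ t ih =>
    rw [shiftVote, Function.iterate_succ_apply', ← shiftVote, shiftOne_apply_val, ih p, ih x,
      if_pos rfl]
    split_ifs <;> omega

theorem shiftVote_apply_self_val (p : C) (t : ℕ) (w : C ≃ Fin m) :
    ((shiftVote p t w p : Fin m) : ℕ) = (w p : ℕ) - t := by
  rw [shiftVote_apply_val, if_pos rfl]

theorem val_le_shiftVote_apply_val {p x : C} (hx : x ≠ p) (t : ℕ) (w : C ≃ Fin m) :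
    (w x : ℕ) ≤ (shiftVote p t w x : Fin m) := by
  rw [shiftVote_apply_val, if_neg hx]
  split_ifs <;> omega

theorem bordaMargin_shiftVote {p c : C} (hcp : c ≠ p) (t : ℕ) (w : C ≃ Fin m) :
    bordaMargin (shiftVote p t w) p c = bordaMargin w p c + min t (w p) +
      if (w p : ℕ) - t ≤ w c ∧ (w c : ℕ) < w p then 1 else 0 := by
  simp only [bordaMargin, shiftVote_apply_val, if_neg hcp]
  split_ifs <;> omega

theorem bordaMargin_shiftVote_le {p c : C} (hcp : c ≠ p) (t : ℕ) (w : C ≃ Fin m) :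
    bordaMargin (shiftVote p t w) p c ≤ bordaMargin w p c + 2 * min t (w p) := by
  rw [bordaMargin_shiftVote hcp]
  split_ifs <;> omega

theorem bordaMargin_le_bordaMargin_shiftVote {p x : C} (hx : x ≠ p) (t : ℕ) (w : C ≃ Fin m) :
    bordaMargin w p x ≤ bordaMargin (shiftVote p t w) p x := by
  have := val_le_shiftVote_apply_val hx t w
  simp only [bordaMargin, shiftVote_apply_self_val]
  omega

end Shift

section Increments

variable {k T N : ℕ} {f : ℕ → ℕ}

theorem cast_eq_of_increments (hk : 1 ≤ k) (hT : 2 ≤ T) (h0 : f 0 = 0)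
    (hstep : ∀ j, 1 ≤ j → j ≤ N → f j = f (j - 1) +
      (if j = 1 then T + 1 else if j ≤ k then T else if j = k + 1 then T - 2 else T - 1))
    {j : ℕ} (hj : j ≤ N) :
    (f j : ℤ) =
      if j = 0 then 0 else if j ≤ k then (j : ℤ) * T + 1 else (j : ℤ) * T + k - j := by
  induction j with
  | zero => simp [h0]
  | succ j ih =>
    rw [hstep (j + 1) (by omega) hj, Nat.add_sub_cancel, Nat.cast_add, ih (by omega)]
    push_cast
    split_ifs <;> push_cast [Nat.cast_sub hT, Nat.cast_sub (by omega : 1 ≤ T)] <;> grind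

theorem mul_le_two_mul_of_increments (hk : 1 ≤ k) (hT : 2 ≤ T) (h0 : f 0 = 0)
    (hstep : ∀ j, 1 ≤ j → j ≤ N → f j = f (j - 1) +
      (if j = 1 then T + 1 else if j ≤ k then T else if j = k + 1 then T - 2 else T - 1))
    {j : ℕ} (hj : j ≤ N) :
    (j * T : ℤ) ≤ 2 * f j := by
  rw [cast_eq_of_increments hk hT h0 hstep hj]
  split_ifs
  · simp_all
  · nlinarith
  · nlinarith

end Increments

theorem sum_fin_add_two_ite {M : Type*} [AddCommMonoid M] (n : ℕ) (a b d : M) :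
    ∑ v : Fin (n + 2), (if (v : ℕ) < n then a else if (v : ℕ) = n then b else d) =
      n • a + b + d := by
  simp [Fin.sum_univ_castSucc]

theorem sum_fin_ite_val_lt {M : Type*} [AddCommMonoid M] {N m : ℕ} (h : m ≤ N) (a : M) :
    ∑ v : Fin N, (if (v : ℕ) < m then a else 0) = m • a := by
  rw [← sum_filter, sum_const, Fin.card_filter_val_lt, min_eq_right h]

theorem forall_sum_le_iff_sum_bordaMargin_nonneg {C ι : Type*} [DecidableEq C] [Fintype ι]
    {m : ℕ} (M : ℤ) (votes : ι → C ≃ Fin m) (t : ι → ℕ) {p c : C}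
    (hrival : ∀ x, x ≠ p → x ≠ c → 0 ≤ ∑ i, bordaMargin (votes i) p x) :
    (∀ x, ∑ i, (M - (shiftVote p (t i) (votes i) x : ℕ)) ≤
        ∑ i, (M - (shiftVote p (t i) (votes i) p : ℕ))) ↔
      0 ≤ ∑ i, bordaMargin (shiftVote p (t i) (votes i)) p c := by
  simp only [fun x => sum_sub_le_sum_sub_iff univ M (fun i => shiftVote p (t i) (votes i)) x p]
  refine ⟨fun h => h c, fun hc x => ?_⟩
  by_cases hxp : x = p
  · simp [hxp, bordaMargin]
  by_cases hxc : x = c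
  · exact hxc ▸ hc
  exact (hrival x hxp hxc).trans
    (sum_le_sum fun i _ => bordaMargin_le_bordaMargin_shiftVote hxp (t i) (votes i))

section BordaInstance

variable {C : Type*} {k T : ℕ}

structure InstancePositions (k : ℕ) (votes : Fin (4 * k + 2) → C ≃ Fin (4 * k + 2))
    (p c : C) : Prop where
  pos_p : ∀ v, ((votes v p : Fin (4 * k + 2)) : ℕ) =
    if (v : ℕ) < 4 * k then 1 else if (v : ℕ) = 4 * k then 4 * k + 1 else 0
  pos_c : ∀ v, ((votes v c : Fin (4 * k + 2)) : ℕ) =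
    if (v : ℕ) < 4 * k then 0 else if (v : ℕ) = 4 * k then 0 else 4 * k + 1

structure InstanceCosts (k T : ℕ) (π : Fin (4 * k + 2) → ℕ → ℕ) : Prop where
  zero : ∀ v, π v 0 = 0
  first : ∀ v : Fin (4 * k + 2), (v : ℕ) < 4 * k → ∀ ℓ, 1 ≤ ℓ → π v ℓ = T
  last : ∀ v : Fin (4 * k + 2), (v : ℕ) = 4 * k + 1 → ∀ ℓ, π v ℓ = 0
  middle : ∀ v : Fin (4 * k + 2), (v : ℕ) = 4 * k →
    (∀ j, 1 ≤ j → j ≤ 4 * k + 1 → π v j = π v (j - 1) +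
      (if j = 1 then T + 1 else if j ≤ k then T else if j = k + 1 then T - 2 else T - 1)) ∧
    (∀ ℓ, 4 * k + 1 ≤ ℓ → π v ℓ = π v (4 * k + 1))

variable {votes : Fin (4 * k + 2) → C ≃ Fin (4 * k + 2)} {p c : C}
  {π : Fin (4 * k + 2) → ℕ → ℕ}

theorem InstancePositions.ne (h : InstancePositions k votes p c) : c ≠ p := fun hcp => by
  simpa [hcp, h.pos_p] using h.pos_c ⟨4 * k + 1, by omega⟩

theorem InstancePositions.sum_bordaMargin_eq (h : InstancePositions k votes p c) :
    ∑ v, bordaMargin (votes v) p c = -(4 * k : ℤ) := by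
  have hv : ∀ v : Fin (4 * k + 2), bordaMargin (votes v) p c =
      if (v : ℕ) < 4 * k then -1
      else if (v : ℕ) = 4 * k then -(4 * (k : ℤ) + 1) else 4 * k + 1 := by
    intro v
    simp only [bordaMargin, h.pos_p, h.pos_c]
    split_ifs <;> push_cast <;> ring
  rw [sum_congr rfl fun v _ => hv v, sum_fin_add_two_ite]
  simp
  ring

theorem InstancePositions.sum_bordaMargin_nonneg (h : InstancePositions k votes p c) {x : C}
    (hxp : x ≠ p) (hxc : x ≠ c) :
    0 ≤ ∑ v, bordaMargin (votes v) p x := by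
  have hv : ∀ v : Fin (4 * k + 2),
      (if (v : ℕ) < 4 * k then 1 else if (v : ℕ) = 4 * k then -(4 * (k : ℤ) + 1) else 1) ≤
        bordaMargin (votes v) p x := by
    intro v
    have hp : (votes v x : ℕ) ≠ votes v p := fun h => hxp ((votes v).injective (Fin.ext h))
    have hc : (votes v x : ℕ) ≠ votes v c := fun h => hxc ((votes v).injective (Fin.ext h))
    simp only [bordaMargin, h.pos_p] at hp ⊢
    rw [h.pos_c] at hc
    split_ifs at hp hc ⊢ <;> omega
  have hsum : ∑ v : Fin (4 * k + 2),
      (if (v : ℕ) < 4 * k then 1 else if (v : ℕ) = 4 * k then -(4 * (k : ℤ) + 1) else 1) =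
        0 := by
    rw [sum_fin_add_two_ite]
    simp
  exact hsum.ge.trans (sum_le_sum fun v _ => hv v)

theorem mul_gain_le_two_mul_middle_cost (hk : 1 ≤ k) (hT : T = 2 * k) {f : ℕ → ℕ}
    (h0 : f 0 = 0)
    (hstep : ∀ j, 1 ≤ j → j ≤ 4 * k + 1 → f j = f (j - 1) +
      (if j = 1 then T + 1 else if j ≤ k then T else if j = k + 1 then T - 2 else T - 1))
    (hcap : ∀ ℓ, 4 * k + 1 ≤ ℓ → f ℓ = f (4 * k + 1)) (ℓ : ℕ) :
    (T : ℤ) * (min ℓ (4 * k + 1) + if 4 * k + 1 ≤ ℓ then 1 else 0 : ℕ) ≤ 2 * f ℓ := by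
  have hT2 : 2 ≤ T := by omega
  by_cases hℓ : 4 * k + 1 ≤ ℓ
  -- Once `c` is passed the gain is `4k + 2` at the capped price `(4k+1)T - 3k - 1`;
  -- this is the only place where `T = 2k` rather than `2 ≤ T` is needed.
  · rw [hcap ℓ hℓ, cast_eq_of_increments hk hT2 h0 hstep le_rfl, min_eq_right hℓ,
      if_pos hℓ]
    simp only [if_neg (by omega : 4 * k + 1 ≠ 0), if_neg (by omega : ¬4 * k + 1 ≤ k)]
    subst hT
    push_cast
    nlinarith
  · rw [min_eq_left (by omega), if_neg hℓ, add_zero, mul_comm]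
    exact mul_le_two_mul_of_increments hk hT2 h0 hstep (by omega)

theorem InstanceCosts.sum_shift_first_votes_eq (hπ : InstanceCosts k T π) :
    ∑ v : Fin (4 * k + 2), π v (if (v : ℕ) < 2 * k then 1 else 0) = 2 * k * T := by
  have hv : ∀ v : Fin (4 * k + 2),
      π v (if (v : ℕ) < 2 * k then 1 else 0) = if (v : ℕ) < 2 * k then T else 0 := by
    intro v
    split_ifs with hv
    · exact hπ.first v (by omega) 1 le_rfl
    · exact hπ.zero v
  rw [sum_congr rfl fun v _ => hv v, sum_fin_ite_val_lt (by omega), smul_eq_mul]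

variable [DecidableEq C]

theorem mul_bordaMargin_gain_le_two_mul_cost (hk : 1 ≤ k) (hT : T = 2 * k)
    (hpos : InstancePositions k votes p c) (hπ : InstanceCosts k T π) (v : Fin (4 * k + 2))
    (ℓ : ℕ) :
    (T : ℤ) * (bordaMargin (shiftVote p ℓ (votes v)) p c - bordaMargin (votes v) p c) ≤
      2 * π v ℓ := by
  have hgain := bordaMargin_shiftVote_le hpos.ne ℓ (votes v)
  rw [hpos.pos_p] at hgain
  rcases lt_trichotomy (v : ℕ) (4 * k) with hv | hv | hv
  · rw [if_pos hv] at hgain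
    rcases Nat.eq_zero_or_pos ℓ with rfl | hℓ
    · simp [shiftVote, hπ.zero]
    · rw [hπ.first v hv ℓ hℓ]
      rw [min_eq_right hℓ] at hgain
      push_cast at hgain
      nlinarith
  · have hmid := mul_gain_le_two_mul_middle_cost hk hT (hπ.zero v) (hπ.middle v hv).1
      (hπ.middle v hv).2 ℓ
    have e := bordaMargin_shiftVote hpos.ne ℓ (votes v)
    simp only [hpos.pos_p, hpos.pos_c, hv, lt_irrefl, if_false, if_true] at e
    rw [e]
    convert hmid using 2
    push_cast
    split_ifs <;> omega
  · rw [if_neg (by omega), if_neg (by omega), min_eq_right (Nat.zero_le _)] at hgain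
    rw [hπ.last v (by omega)]
    push_cast at hgain ⊢
    nlinarith

theorem mul_le_two_mul_sum_cost (hk : 1 ≤ k) (hT : T = 2 * k)
    (hpos : InstancePositions k votes p c) (hπ : InstanceCosts k T π)
    (t : Fin (4 * k + 2) → ℕ) :
    (T : ℤ) * (∑ v, bordaMargin (shiftVote p (t v) (votes v)) p c + 4 * k) ≤
      2 * ∑ v, π v (t v) := by
  rw [← neg_neg (4 * k : ℤ), ← hpos.sum_bordaMargin_eq, ← sub_eq_add_neg,
    ← sum_sub_distrib, mul_sum]
  push_cast
  rw [mul_sum]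
  exact sum_le_sum fun v _ => mul_bordaMargin_gain_le_two_mul_cost hk hT hpos hπ v (t v)

theorem InstancePositions.sum_bordaMargin_shiftVote_eq_zero
    (hpos : InstancePositions k votes p c) :
    ∑ v : Fin (4 * k + 2),
      bordaMargin (shiftVote p (if (v : ℕ) < 2 * k then 1 else 0) (votes v)) p c = 0 := by
  have hv : ∀ v : Fin (4 * k + 2),
      bordaMargin (shiftVote p (if (v : ℕ) < 2 * k then 1 else 0) (votes v)) p c =
        bordaMargin (votes v) p c + if (v : ℕ) < 2 * k then 2 else 0 := by
    intro v
    split_ifs with hv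
    · have h4 : (v : ℕ) < 4 * k := by omega
      simp [bordaMargin_shiftVote hpos.ne, hpos.pos_p, hpos.pos_c, h4]
      ring
    · simp [shiftVote]
  rw [sum_congr rfl fun v _ => hv v, sum_add_distrib, hpos.sum_bordaMargin_eq,
    sum_fin_ite_val_lt (by omega)]
  simp
  ring

end BordaInstance

theorem stmt15_general (k : ℕ) (hk : 1 ≤ k) (T : ℕ) (hT : T = 2 * k)
    {C : Type*} [DecidableEq C]
    (p c : C)
    (votes : Fin (4 * k + 2) → C ≃ Fin (4 * k + 2))
    (hposP : ∀ v, ((votes v p : Fin (4 * k + 2)) : ℕ) =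
      if (v : ℕ) < 4 * k then 1 else if (v : ℕ) = 4 * k then 4 * k + 1 else 0)
    (hposC : ∀ v, ((votes v c : Fin (4 * k + 2)) : ℕ) =
      if (v : ℕ) < 4 * k then 0 else if (v : ℕ) = 4 * k then 0 else 4 * k + 1)
    (π : Fin (4 * k + 2) → ℕ → ℕ)
    (hπ0 : ∀ v, π v 0 = 0)
    (hπfirst : ∀ v : Fin (4 * k + 2), (v : ℕ) < 4 * k → ∀ ℓ, 1 ≤ ℓ → π v ℓ = T)
    (hπlast : ∀ v : Fin (4 * k + 2), (v : ℕ) = 4 * k + 1 → ∀ ℓ, π v ℓ = 0)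
    (hπmid : ∀ v : Fin (4 * k + 2), (v : ℕ) = 4 * k →
      (∀ j, 1 ≤ j → j ≤ 4 * k + 1 → π v j = π v (j - 1) +
        (if j = 1 then T + 1 else if j ≤ k then T
         else if j = k + 1 then T - 2 else T - 1)) ∧
      (∀ ℓ, 4 * k + 1 ≤ ℓ → π v ℓ = π v (4 * k + 1))) :
    -- Borda score after applying a shift-action t
    let Sc : (Fin (4 * k + 2) → ℕ) → C → ℤ := fun t x =>
      ∑ v, ((4 * k + 1 : ℤ) - ((shiftVote p (t v) (votes v) x : Fin (4 * k + 2)) : ℕ))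
    let success : (Fin (4 * k + 2) → ℕ) → Prop := fun t => ∀ x, Sc t x ≤ Sc t p
    let cost : (Fin (4 * k + 2) → ℕ) → ℕ := fun t => ∑ v, π v (t v)
    IsLeast {b : ℕ | ∃ t, success t ∧ b = cost t} (2 * k * T) ∧
    ∃ t : Fin (4 * k + 2) → ℕ, (∀ v, t v ≤ 1) ∧
      (∀ v, t v = 1 → (v : ℕ) < 4 * k) ∧
      (Finset.univ.filter fun v => t v = 1).card = 2 * k ∧
      success t ∧ cost t = 2 * k * T := by
  intro Sc success cost
  have hpos : InstancePositions k votes p c := ⟨hposP, hposC⟩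
  have hπ : InstanceCosts k T π := ⟨hπ0, hπfirst, hπlast, hπmid⟩
  have hsuccess : ∀ t, success t ↔ 0 ≤ ∑ v, bordaMargin (shiftVote p (t v) (votes v)) p c :=
    fun t => forall_sum_le_iff_sum_bordaMargin_nonneg _ votes t
      fun _ hxp hxc => hpos.sum_bordaMargin_nonneg hxp hxc
  let t₀ : Fin (4 * k + 2) → ℕ := fun v => if (v : ℕ) < 2 * k then 1 else 0
  have hsucc₀ : success t₀ := (hsuccess t₀).2 hpos.sum_bordaMargin_shiftVote_eq_zero.ge
  have hcost₀ : cost t₀ = 2 * k * T := hπ.sum_shift_first_votes_eq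
  refine ⟨⟨⟨t₀, hsucc₀, hcost₀.symm⟩, ?_⟩,
    t₀, fun v => ?_, fun v hv => ?_, ?_, hsucc₀, hcost₀⟩
  · rintro _ ⟨t, ht, rfl⟩
    have hbound := mul_le_two_mul_sum_cost hk hT hpos hπ t
    have hwin := (hsuccess t).1 ht
    zify
    nlinarith
  · dsimp only [t₀]
    split_ifs <;> omega
  · dsimp only [t₀] at hv
    split_ifs at hv
    omega
  · have : univ.filter (fun v => t₀ v = 1) =
        univ.filter (fun v : Fin (4 * k + 2) => (v : ℕ) < 2 * k) := by
      ext v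
      simp [t₀]
    rw [this, Fin.card_filter_val_lt, min_eq_right (by omega)]

/-- in the Borda shift-bribery instance `I_k` (candidates
`{p, c, a₁, …, a_{4k}}`, `4k+2` voters with the positions of the construction,
and the cost functions described: each of the first `4k` voters, who rank `p`
second, charges `T` per unit shift; voter `v^{4k+1}` charges `T+1` for the
first position, `T` for positions `2..k`, `T−2` for position `k+1`, and `T−1`
thereafter, capping at position `4k+1`; voter `v^{4k+2}` charges nothing), the
minimum cost of a successful shift-action is exactly `2kT`, achieved by
shifting `p` up one position in `2k` of the first `4k` votes. -/
theorem stmt15 (k : ℕ) (hk : 1 ≤ k) (T : ℕ) (hT : T = 2 * k)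
    {C : Type*} [Fintype C] [DecidableEq C] (hcard : Fintype.card C = 4 * k + 2)
    (p c : C) (A : Fin (4 * k) → C)
    (votes : Fin (4 * k + 2) → C ≃ Fin (4 * k + 2))
    (hposP : ∀ v, ((votes v p : Fin (4 * k + 2)) : ℕ) =
      if (v : ℕ) < 4 * k then 1 else if (v : ℕ) = 4 * k then 4 * k + 1 else 0)
    (hposC : ∀ v, ((votes v c : Fin (4 * k + 2)) : ℕ) =
      if (v : ℕ) < 4 * k then 0 else if (v : ℕ) = 4 * k then 0 else 4 * k + 1)
    (hposA : ∀ (j : Fin (4 * k)) v, ((votes v (A j) : Fin (4 * k + 2)) : ℕ) =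
      if (v : ℕ) < 4 * k then
        (if (v : ℕ) % 2 = 0 then (j : ℕ) + 2 else 4 * k + 1 - (j : ℕ))
      else if (v : ℕ) = 4 * k then 4 * k - (j : ℕ) else (j : ℕ) + 1)
    (π : Fin (4 * k + 2) → ℕ → ℕ)
    (hπ0 : ∀ v, π v 0 = 0)
    (hπfirst : ∀ v : Fin (4 * k + 2), (v : ℕ) < 4 * k → ∀ ℓ, 1 ≤ ℓ → π v ℓ = T)
    (hπlast : ∀ v : Fin (4 * k + 2), (v : ℕ) = 4 * k + 1 → ∀ ℓ, π v ℓ = 0)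
    (hπmid : ∀ v : Fin (4 * k + 2), (v : ℕ) = 4 * k →
      (∀ j, 1 ≤ j → j ≤ 4 * k + 1 → π v j = π v (j - 1) +
        (if j = 1 then T + 1 else if j ≤ k then T
         else if j = k + 1 then T - 2 else T - 1)) ∧
      (∀ ℓ, 4 * k + 1 ≤ ℓ → π v ℓ = π v (4 * k + 1))) :
    -- Borda score after applying a shift-action t
    let Sc : (Fin (4 * k + 2) → ℕ) → C → ℤ := fun t x =>
      ∑ v, ((4 * k + 1 : ℤ) - ((shiftVote p (t v) (votes v) x : Fin (4 * k + 2)) : ℕ))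
    let success : (Fin (4 * k + 2) → ℕ) → Prop := fun t => ∀ x, Sc t x ≤ Sc t p
    let cost : (Fin (4 * k + 2) → ℕ) → ℕ := fun t => ∑ v, π v (t v)
    IsLeast {b : ℕ | ∃ t, success t ∧ b = cost t} (2 * k * T) ∧
    ∃ t : Fin (4 * k + 2) → ℕ, (∀ v, t v ≤ 1) ∧
      (∀ v, t v = 1 → (v : ℕ) < 4 * k) ∧
      (Finset.univ.filter fun v => t v = 1).card = 2 * k ∧
      success t ∧ cost t = 2 * k * T :=
  stmt15_general k hk T hT p c votes hposP hposC π hπ0 hπfirst hπlast hπmid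
end
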